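/- arXiv:0804.1935 — 7 statements merged into one kernel-verified Lean document; each statement's English description precedes it below -/
import Mathlib

section
/- The joint distribution of (d₃, i₃) on permutations of [n+1] beginning with 1 equals the joint distribution of (d̂, î) on Sₙ: ∑_{σ∈S̃_{n+1}} t^{d₃(σ)} q^{i₃(σ)} = ∑_{ω∈Sₙ} t^{d̂(ω)} q^{î(ω)}. -/
open Finset
open scoped Classical

/-- entry of a permutation of `Fin n` at 0-indexed position `i` (0-based values). -/
def ent {n : ℕ} (σ : Equiv.Perm (Fin n)) (i : ℕ) : ℕ :=
  if h : i < n then (σ ⟨i, h⟩ : ℕ) else 0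

/-- the triple `(a, b, c)` of distinct values, reduced to a permutation in `S₃`, is odd. -/
def odd3 (a b c : ℕ) : Prop :=
  ((if b < a then 1 else 0) + (if c < a then 1 else 0) + (if c < b then 1 else 0)) % 2 = 1

instance (a b c : ℕ) : Decidable (odd3 a b c) := by
  unfold odd3; infer_instance

/-- 3-descent set, 0-indexed positions (position `i` here is paper position `i+1`). -/
def D3 {n : ℕ} (σ : Equiv.Perm (Fin n)) : Finset ℕ :=
  (Finset.range (n - 2)).filter (fun i => odd3 (ent σ i) (ent σ (i + 1)) (ent σ (i + 2)))

/-- alternating descent set, 0-indexed positions. -/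
def altD {n : ℕ} (σ : Equiv.Perm (Fin n)) : Finset ℕ :=
  (Finset.range (n - 1)).filter (fun i =>
    (Even i ∧ ent σ (i + 1) < ent σ i) ∨ (¬ Even i ∧ ent σ i < ent σ (i + 1)))

/-- number of up-down alternating permutations of `[n]` (the Euler number `Eₙ`). -/
noncomputable def EulerNum (n : ℕ) : ℕ :=
  ((Finset.univ : Finset (Equiv.Perm (Fin n))).filter (fun τ =>
    ∀ i ∈ Finset.range (n - 1),
      (Even i ∧ ent τ i < ent τ (i + 1)) ∨ (¬ Even i ∧ ent τ (i + 1) < ent τ i))).card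

/-- `c³ᵢ(σ)`, 0-indexed: number of `j > i+1` with `σᵢ σᵢ₊₁ σⱼ` odd. -/
def c3 {n : ℕ} (σ : Equiv.Perm (Fin n)) (i : ℕ) : ℕ :=
  ((Finset.range n).filter (fun j => i + 1 < j ∧ odd3 (ent σ i) (ent σ (i + 1)) (ent σ j))).card

/-- `ĉᵢ(σ)`, 0-indexed. -/
def chat {n : ℕ} (σ : Equiv.Perm (Fin n)) (i : ℕ) : ℕ :=
  ((Finset.range n).filter (fun j => i < j ∧
    ((Even i ∧ ent σ j < ent σ i) ∨ (¬ Even i ∧ ent σ i < ent σ j)))).card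

/-- `i₃` of an arbitrary word `f 0, f 1, ..., f (m-1)`. -/
def i3f (m : ℕ) (f : ℕ → ℕ) : ℕ :=
  ((Finset.range m ×ˢ Finset.range m).filter (fun p =>
    p.1 + 1 < p.2 ∧ odd3 (f p.1) (f (p.1 + 1)) (f p.2))).card

/-- the 3-inversion statistic `i₃`. -/
def i3 {n : ℕ} (σ : Equiv.Perm (Fin n)) : ℕ := i3f n (ent σ)

/-- the word `1*σ` (0-based values): `0, σ₀+1, σ₁+1, ...`. -/
def oneStar {n : ℕ} (σ : Equiv.Perm (Fin n)) : ℕ → ℕ :=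
  fun i => if i = 0 then 0 else ent σ (i - 1) + 1

/-- number of alternating inversions `î(σ)`. -/
def altInv {n : ℕ} (σ : Equiv.Perm (Fin n)) : ℕ :=
  ((Finset.range n ×ˢ Finset.range n).filter (fun p => p.1 < p.2 ∧
    ((Even p.1 ∧ ent σ p.2 < ent σ p.1) ∨ (¬ Even p.1 ∧ ent σ p.1 < ent σ p.2)))).card

/-- number of inversions of the word `f 0, ..., f (m-1)`. -/
def invf (m : ℕ) (f : ℕ → ℕ) : ℕ :=
  ((Finset.range m ×ˢ Finset.range m).filter (fun p => p.1 < p.2 ∧ f p.2 < f p.1)).card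

/-- major index of the word `f 0, ..., f (m-1)` (descent at 0-indexed `i` contributes `i+1`). -/
def majf (m : ℕ) (f : ℕ → ℕ) : ℕ :=
  ∑ i ∈ (Finset.range (m - 1)).filter (fun i => f (i + 1) < f i), (i + 1)

/-- `Â(m, r)`: number of permutations of `[m]` with `r - 1` alternating descents. -/
def Ahat (m r : ℕ) : ℕ :=
  ((Finset.univ : Finset (Equiv.Perm (Fin m))).filter (fun σ => (altD σ).card + 1 = r)).card

/-- down-up alternating: `σ₁ > σ₂ < σ₃ > ⋯`. -/
def DownUp {n : ℕ} (σ : Equiv.Perm (Fin n)) : Prop :=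
  ∀ i ∈ Finset.range (n - 1),
    (Even i ∧ ent σ (i + 1) < ent σ i) ∨ (¬ Even i ∧ ent σ i < ent σ (i + 1))

instance {n : ℕ} (σ : Equiv.Perm (Fin n)) : Decidable (DownUp σ) := by
  unfold DownUp; infer_instance

/-- up-down alternating: `σ₁ < σ₂ > σ₃ < ⋯`. -/
def UpDown {n : ℕ} (σ : Equiv.Perm (Fin n)) : Prop :=
  ∀ i ∈ Finset.range (n - 1),
    (Even i ∧ ent σ i < ent σ (i + 1)) ∨ (¬ Even i ∧ ent σ (i + 1) < ent σ i)


/-!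
Both sides are pushed forward to Lehmer-type codes `c ∈ ∏_{i<n} [0, n-1-i]`: for `σ ∈ S̃_{n+1}`
take `c_i = c³ᵢ(σ) = #{j > i+1 : σᵢσᵢ₊₁σⱼ odd}`, for `ω ∈ Sₙ` take `ĉᵢ(ω)`. Both maps are
injective, hence bijective since both sides have `n!` elements: the entries are recovered from
left to right, because `ĉᵢ` counts the remaining values below `ωᵢ` in a linear order, and `c³ᵢ`
counts the remaining values below `σᵢ₊₁` in the cyclic order started at `σᵢ`. In both cases the
inversion statistic is the sum of the code, and a descent occurs at `i` exactly when
`c_i + c_{i+1} ≥ n-1-i`, so both generating functions are the same sum over codes.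
-/

section Counting

variable {α : Type*}

lemma card_filter_product {β : Type*} (s : Finset α) (t : Finset β) (P : α → β → Prop)
    [∀ a, DecidablePred (P a)] :
    #((s ×ˢ t).filter (fun p => P p.1 p.2)) = ∑ a ∈ s, #(t.filter (P a)) := by
  simp only [card_filter, sum_product]

lemma card_filter_injOn (T : Finset α) (r : α → α → Prop) [DecidableRel r]
    (irrefl : ∀ x ∈ T, ¬ r x x) (trans : ∀ x ∈ T, ∀ y ∈ T, ∀ z ∈ T, r x y → r y z → r x z)
    (total : ∀ x ∈ T, ∀ y ∈ T, x ≠ y → r x y ∨ r y x) :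
    Set.InjOn (fun b => #(T.filter (r · b))) T := by
  have hlt : ∀ x ∈ T, ∀ y ∈ T, r x y → #(T.filter (r · x)) < #(T.filter (r · y)) := by
    intro x hx y hy hxy
    refine card_lt_card ⟨fun v hv => ?_, fun hsub => irrefl x hx ?_⟩
    · obtain ⟨hvT, hvx⟩ := mem_filter.1 hv
      exact mem_filter.2 ⟨hvT, trans v hvT x hx y hy hvx hxy⟩
    · exact (mem_filter.1 (hsub (mem_filter.2 ⟨hx, hxy⟩))).2
  intro x hx y hy hcard
  by_contra hne
  rcases total x hx y hy hne with h | h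
  · exact (hlt x hx y hy h).ne hcard
  · exact (hlt y hy x hx h).ne' hcard

lemma iff_card_le_card_filter_add_card_filter [DecidableEq α] {S : Finset α} {P Q : α → Prop}
    [DecidablePred P] [DecidablePred Q] {d : Prop} {j₀ : α} (hj₀ : j₀ ∈ S)
    (hcover : d → ∀ j ∈ S, P j ∨ Q j) (hdisj : ¬ d → ∀ j ∈ S, ¬ (P j ∧ Q j))
    (hgap : ¬ d → ¬ P j₀ ∧ ¬ Q j₀) :
    d ↔ #S ≤ #(S.filter P) + #(S.filter Q) := by
  rw [← card_union_add_card_inter, ← filter_or, ← filter_and]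
  by_cases hd : d
  · simp only [hd, true_iff, filter_true_of_mem (hcover hd)]
    omega
  · simp only [hd, false_iff, not_le, filter_false_of_mem (hdisj hd), card_empty, add_zero]
    exact card_lt_card (filter_ssubset.2 ⟨j₀, hj₀, by tauto⟩)

lemma filter_Ico_eq_filter_Ioo [PartialOrder α] [LocallyFiniteOrder α] {p : α → Prop}
    [DecidablePred p] {a b : α} (ha : ¬ p a) :
    (Ico a b).filter p = (Ioo a b).filter p := by
  ext x
  simp only [mem_filter, mem_Ico, mem_Ioo]
  refine ⟨fun ⟨⟨hax, hxb⟩, hp⟩ => ⟨⟨lt_of_le_of_ne hax ?_, hxb⟩, hp⟩,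
    fun ⟨⟨hax, hxb⟩, hp⟩ => ⟨⟨hax.le, hxb⟩, hp⟩⟩
  rintro rfl
  exact ha hp

lemma filter_range_lt_and (m i : ℕ) (p : ℕ → Prop) [DecidablePred p] :
    (range m).filter (fun j => i < j ∧ p j) = (Ioo i m).filter p := by
  ext j
  simp only [mem_filter, mem_range, mem_Ioo]
  tauto

end Counting

section Entries

variable {m : ℕ} (σ : Equiv.Perm (Fin m))

lemma ent_lt {i : ℕ} (hi : i < m) : ent σ i < m := by
  simp [ent, hi]

lemma ent_injOn : Set.InjOn (ent σ) (Set.Iio m) := by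
  intro i hi j hj h
  simp only [Set.mem_Iio] at hi hj
  simp only [ent, hi, hj, dif_pos] at h
  exact congrArg Fin.val (σ.injective (Fin.ext h))

lemma ext_ent {σ σ' : Equiv.Perm (Fin m)} (h : ∀ i < m, ent σ i = ent σ' i) : σ = σ' :=
  Equiv.ext fun x => Fin.ext (by simpa [ent] using h x x.isLt)

lemma ent_zero (σ : Equiv.Perm (Fin (m + 1))) : ent σ 0 = σ 0 := by
  simp [ent]

def valuesFrom (i : ℕ) : Finset ℕ := (Ico i m).image (ent σ)

lemma card_filter_valuesFrom (i : ℕ) (p : ℕ → Prop) [DecidablePred p] :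
    #((valuesFrom σ i).filter p) = #((Ico i m).filter (fun j => p (ent σ j))) := by
  rw [valuesFrom, filter_image, card_image_of_injOn]
  exact (ent_injOn σ).mono fun j hj => (mem_Ico.1 (mem_filter.1 hj).1).2

lemma ent_mem_valuesFrom {i : ℕ} (hi : i < m) : ent σ i ∈ valuesFrom σ i :=
  mem_image_of_mem _ (mem_Ico.2 ⟨le_rfl, hi⟩)

lemma ent_notMem_valuesFrom {i k : ℕ} (hk : k < i) (hkm : k < m) :
    ent σ k ∉ valuesFrom σ i := by
  simp only [valuesFrom, mem_image, mem_Ico, not_exists, not_and]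
  rintro j ⟨hij, hjm⟩ h
  have := ent_injOn σ hjm hkm h
  omega

lemma valuesFrom_eq_sdiff (i : ℕ) :
    valuesFrom σ i = range m \ (range i).image (ent σ) := by
  ext v
  simp only [valuesFrom, mem_image, mem_sdiff, mem_range, mem_Ico, not_exists, not_and]
  constructor
  · rintro ⟨j, ⟨hij, hjm⟩, rfl⟩
    refine ⟨ent_lt σ hjm, fun k hk h => ?_⟩
    have := ent_injOn σ (show k < m by omega) hjm h
    omega
  · rintro ⟨hv, hnot⟩
    let j := σ.symm ⟨v, hv⟩
    have hj : ent σ j = v := by simp [ent, j]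
    refine ⟨j, ⟨?_, j.isLt⟩, hj⟩
    by_contra hlt
    exact hnot j (by omega) hj

lemma valuesFrom_congr {σ σ' : Equiv.Perm (Fin m)} {i : ℕ}
    (h : ∀ k < i, ent σ k = ent σ' k) : valuesFrom σ i = valuesFrom σ' i := by
  rw [valuesFrom_eq_sdiff σ, valuesFrom_eq_sdiff σ',
    image_congr fun k hk => h k (mem_range.1 hk)]

lemma valuesFrom_of_succ_eq {i : ℕ} (hi : i + 1 = m) : valuesFrom σ i = {ent σ i} := by
  subst hi
  rw [valuesFrom, Nat.Ico_succ_singleton, image_singleton]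

lemma ext_ent_of_prefix {σ σ' : Equiv.Perm (Fin m)}
    (step : ∀ i < m - 1, (∀ k < i, ent σ k = ent σ' k) → ent σ i = ent σ' i) : σ = σ' := by
  refine ext_ent fun i => ?_
  induction i using Nat.strong_induction_on with
  | _ i ih =>
    intro hi
    have hpre : ∀ k < i, ent σ k = ent σ' k := fun k hk => ih k hk (by omega)
    by_cases hlast : i < m - 1
    · exact step i hlast hpre
    · have hT := valuesFrom_congr hpre
      rwa [valuesFrom_of_succ_eq σ (by omega), valuesFrom_of_succ_eq σ' (by omega),
        singleton_inj] at hT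

end Entries

section Odd3

/- For distinct values, `odd3 c b v` says that `v` lies strictly between `c` and `b` in the
cyclic order of values started at `c`; hence `fun v b => odd3 c b v` is a strict linear order on
the values other than `c`. -/

lemma odd3_self_right (a b : ℕ) : ¬ odd3 a b b := by
  intro h
  unfold odd3 at h; split_ifs at h <;> omega

lemma odd3_trans {c x y z : ℕ} (hxy : odd3 c y x) (hyz : odd3 c z y) : odd3 c z x := by
  unfold odd3 at *; split_ifs at * <;> omega

lemma odd3_total {c x y : ℕ} (hxy : x ≠ y) (hx : x ≠ c) (hy : y ≠ c) :
    odd3 c y x ∨ odd3 c x y := by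
  unfold odd3; split_ifs <;> omega

lemma odd3_or_odd3_of_odd3 {a b c x : ℕ} (h : odd3 a b c) : odd3 a b x ∨ odd3 b c x := by
  unfold odd3 at *; split_ifs at * <;> omega

lemma not_odd3_and_odd3_of_not_odd3 {a b c x : ℕ} (h : ¬ odd3 a b c) :
    ¬ (odd3 a b x ∧ odd3 b c x) := by
  rintro ⟨hab, hbc⟩
  unfold odd3 at h hab hbc; split_ifs at h hab hbc <;> omega

end Odd3

/-- The order in which `ĉᵢ` counts: the usual one at even (0-indexed) positions `i`, the reverse
one at odd positions. -/
def altLt (i a b : ℕ) : Prop := (Even i ∧ a < b) ∨ (¬ Even i ∧ b < a)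

instance (i : ℕ) : DecidableRel (altLt i) := fun a b =>
  inferInstanceAs (Decidable ((Even i ∧ a < b) ∨ (¬ Even i ∧ b < a)))

section AltLt

variable {i a b c : ℕ}

lemma altLt_irrefl (i a : ℕ) : ¬ altLt i a a := by
  simp [altLt]

lemma altLt_trans (hab : altLt i a b) (hbc : altLt i b c) : altLt i a c := by
  simp only [altLt, Nat.even_iff] at *; omega

lemma altLt_total (hab : a ≠ b) : altLt i a b ∨ altLt i b a := by
  simp only [altLt, Nat.even_iff]; omega

lemma altLt_succ : altLt (i + 1) a b ↔ altLt i b a := by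
  simp only [altLt, Nat.even_iff]; omega

end AltLt

section Codes

variable {m : ℕ} (σ : Equiv.Perm (Fin m))

lemma chat_eq_card_filter_Ioo (i : ℕ) :
    chat σ i = #((Ioo i m).filter (fun j => altLt i (ent σ j) (ent σ i))) := by
  rw [chat, filter_range_lt_and]
  rfl

lemma c3_eq_card_filter_Ioo (i : ℕ) :
    c3 σ i = #((Ioo (i + 1) m).filter (fun j => odd3 (ent σ i) (ent σ (i + 1)) (ent σ j))) := by
  rw [c3, filter_range_lt_and]

lemma chat_le (i : ℕ) : chat σ i ≤ m - (i + 1) := by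
  rw [chat_eq_card_filter_Ioo]
  exact (card_filter_le _ _).trans (by simp; omega)

lemma c3_le (i : ℕ) : c3 σ i ≤ m - (i + 2) := by
  rw [c3_eq_card_filter_Ioo]
  exact (card_filter_le _ _).trans (by simp; omega)

lemma chat_eq_card_valuesFrom (i : ℕ) :
    chat σ i = #((valuesFrom σ i).filter (altLt i · (ent σ i))) := by
  rw [chat_eq_card_filter_Ioo, ← filter_Ico_eq_filter_Ioo, card_filter_valuesFrom]
  exact altLt_irrefl _ _

lemma c3_eq_card_valuesFrom (i : ℕ) :
    c3 σ i = #((valuesFrom σ (i + 1)).filter (odd3 (ent σ i) (ent σ (i + 1)))) := by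
  rw [c3_eq_card_filter_Ioo, ← filter_Ico_eq_filter_Ioo, card_filter_valuesFrom]
  exact odd3_self_right _ _

lemma eq_of_chat_eq {ω ω' : Equiv.Perm (Fin m)} (h : ∀ i < m - 1, chat ω i = chat ω' i) :
    ω = ω' := by
  refine ext_ent_of_prefix fun i hi hpre => ?_
  have hT := valuesFrom_congr hpre
  refine card_filter_injOn (valuesFrom ω i) (altLt i) (fun x _ => altLt_irrefl i x)
    (fun _ _ _ _ _ _ => altLt_trans) (fun _ _ _ _ => altLt_total)
    (ent_mem_valuesFrom ω (by omega)) (hT ▸ ent_mem_valuesFrom ω' (by omega)) ?_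
  dsimp only
  rw [← chat_eq_card_valuesFrom, hT, ← chat_eq_card_valuesFrom, h i hi]

lemma eq_of_c3_eq {σ σ' : Equiv.Perm (Fin m)} (h0 : ent σ 0 = ent σ' 0)
    (h : ∀ i < m - 2, c3 σ i = c3 σ' i) : σ = σ' := by
  refine ext_ent_of_prefix fun i hi hpre => ?_
  cases i with
  | zero => exact h0
  | succ k =>
    have hT := valuesFrom_congr hpre
    have hc : ent σ k = ent σ' k := hpre k (Nat.lt_succ_self k)
    have hcT : ∀ v ∈ valuesFrom σ (k + 1), v ≠ ent σ k := fun v hv hvc =>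
      ent_notMem_valuesFrom σ (Nat.lt_succ_self k) (by omega) (hvc ▸ hv)
    refine card_filter_injOn (valuesFrom σ (k + 1)) (fun v b => odd3 (ent σ k) b v)
      (fun x _ => odd3_self_right _ x) (fun _ _ _ _ _ _ => odd3_trans)
      (fun x hx y hy hxy => odd3_total hxy (hcT x hx) (hcT y hy))
      (ent_mem_valuesFrom σ (by omega)) (hT ▸ ent_mem_valuesFrom σ' (by omega)) ?_
    dsimp only
    rw [← c3_eq_card_valuesFrom, hT, hc, ← c3_eq_card_valuesFrom, h k (by omega)]

lemma altLt_iff_le_chat_add_chat {i : ℕ} (hi : i + 1 < m) :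
    altLt i (ent σ (i + 1)) (ent σ i) ↔ m - 1 - i ≤ chat σ i + chat σ (i + 1) := by
  have hsucc : chat σ (i + 1) =
      #((Ioo i m).filter (fun j => altLt i (ent σ (i + 1)) (ent σ j))) := by
    rw [chat_eq_card_filter_Ioo, ← Ico_add_one_left_eq_Ioo i m, filter_Ico_eq_filter_Ioo]
    · simp only [altLt_succ]
    · exact altLt_irrefl _ _
  rw [chat_eq_card_filter_Ioo, hsucc, show m - 1 - i = #(Ioo i m) by simp; omega]
  refine iff_card_le_card_filter_add_card_filter (j₀ := i + 1) (by simp; omega) ?_ ?_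
    fun hd => ⟨hd, altLt_irrefl _ _⟩
  · intro hd j hj
    have hne : ent σ j ≠ ent σ i :=
      (ent_injOn σ).ne (mem_Ioo.1 hj).2 (show i < m by omega) (mem_Ioo.1 hj).1.ne'
    exact (altLt_total hne).imp_right (altLt_trans hd)
  · rintro hd j - ⟨hji, hij⟩
    exact hd (altLt_trans hij hji)

lemma odd3_iff_le_c3_add_c3 {i : ℕ} (hi : i + 2 < m) :
    odd3 (ent σ i) (ent σ (i + 1)) (ent σ (i + 2)) ↔ m - 2 - i ≤ c3 σ i + c3 σ (i + 1) := by
  have hsucc : c3 σ (i + 1) =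
      #((Ioo (i + 1) m).filter (fun j => odd3 (ent σ (i + 1)) (ent σ (i + 2)) (ent σ j))) := by
    rw [c3_eq_card_filter_Ioo, ← Ico_add_one_left_eq_Ioo (i + 1) m, filter_Ico_eq_filter_Ioo]
    exact odd3_self_right _ _
  rw [c3_eq_card_filter_Ioo, hsucc, show m - 2 - i = #(Ioo (i + 1) m) by simp; omega]
  exact iff_card_le_card_filter_add_card_filter (j₀ := i + 2) (by simp; omega)
    (fun hd _ _ => odd3_or_odd3_of_odd3 hd) (fun hd _ _ => not_odd3_and_odd3_of_not_odd3 hd)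
    fun hd => ⟨hd, odd3_self_right _ _⟩

lemma i3_eq_sum_c3 : i3 σ = ∑ i ∈ range m, c3 σ i :=
  card_filter_product _ _ fun a b => a + 1 < b ∧ odd3 (ent σ a) (ent σ (a + 1)) (ent σ b)

lemma altInv_eq_sum_chat : altInv σ = ∑ i ∈ range m, chat σ i :=
  card_filter_product _ _ fun a b => a < b ∧ altLt a (ent σ b) (ent σ a)

lemma card_D3_eq :
    #(D3 σ) = #((range (m - 2)).filter (fun i => m - 2 - i ≤ c3 σ i + c3 σ (i + 1))) :=
  congrArg card <| filter_congr fun i hi =>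
    odd3_iff_le_c3_add_c3 σ (by simp only [mem_range] at hi; omega)

lemma card_altD_eq :
    #(altD σ) = #((range (m - 1)).filter (fun i => m - 1 - i ≤ chat σ i + chat σ (i + 1))) :=
  congrArg card <| filter_congr fun i hi =>
    altLt_iff_le_chat_add_chat σ (by simp only [mem_range] at hi; omega)

end Codes

abbrev LehmerCode (n : ℕ) := (i : Fin n) → Fin (n - i)

lemma card_lehmerCode (n : ℕ) : Fintype.card (LehmerCode n) = n.factorial := by
  rw [Fintype.card_pi]
  simp only [Fintype.card_fin]
  rw [Fin.prod_univ_eq_prod_range (fun i => n - i) n, ← Nat.descFactorial_eq_prod_range,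
    Nat.descFactorial_self]

lemma card_perm_apply_zero_eq_zero (n : ℕ) :
    Fintype.card {σ : Equiv.Perm (Fin (n + 1)) // σ 0 = 0} = n.factorial := by
  rw [← Fintype.card_congr ((Equiv.Perm.subtypeEquivSubtypePerm (· ≠ (0 : Fin (n + 1)))).trans
    (Equiv.subtypeEquivRight fun f => by simp)), Fintype.card_perm]
  simp

def codeSeq {n : ℕ} (c : LehmerCode n) (i : ℕ) : ℕ := if h : i < n then c ⟨i, h⟩ else 0

noncomputable def codeWeight (n : ℕ) (c : ℕ → ℕ) : MvPolynomial (Fin 2) ℚ :=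
  MvPolynomial.X 0 ^ #((range (n - 1)).filter (fun i => n - 1 - i ≤ c i + c (i + 1))) *
    MvPolynomial.X 1 ^ ∑ i ∈ range n, c i

section LehmerCode

variable (n : ℕ)

def c3Code (σ : Equiv.Perm (Fin (n + 1))) : LehmerCode n :=
  fun i => ⟨c3 σ i, by have := c3_le σ i; omega⟩

def chatCode (ω : Equiv.Perm (Fin n)) : LehmerCode n :=
  fun i => ⟨chat ω i, by have := chat_le ω i; omega⟩

lemma codeSeq_c3Code (σ : Equiv.Perm (Fin (n + 1))) : codeSeq (c3Code n σ) = c3 σ := by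
  funext i
  unfold codeSeq
  split_ifs
  · rfl
  · have := c3_le σ i; omega

lemma codeSeq_chatCode (ω : Equiv.Perm (Fin n)) : codeSeq (chatCode n ω) = chat ω := by
  funext i
  unfold codeSeq
  split_ifs
  · rfl
  · have := chat_le ω i; omega

lemma c3Code_bijective :
    Function.Bijective fun σ : {σ : Equiv.Perm (Fin (n + 1)) // σ 0 = 0} => c3Code n σ := by
  refine (Fintype.bijective_iff_injective_and_card _).2
    ⟨fun σ σ' h => Subtype.ext ?_, by rw [card_perm_apply_zero_eq_zero, card_lehmerCode]⟩
  have hseq := congrArg codeSeq h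
  simp only [codeSeq_c3Code] at hseq
  exact eq_of_c3_eq (by rw [ent_zero, ent_zero, σ.2, σ'.2]) fun i _ => congrFun hseq i

lemma chatCode_bijective : Function.Bijective (chatCode n) := by
  refine (Fintype.bijective_iff_injective_and_card _).2
    ⟨fun ω ω' h => ?_, by rw [card_lehmerCode, Fintype.card_perm, Fintype.card_fin]⟩
  have hseq := congrArg codeSeq h
  simp only [codeSeq_chatCode] at hseq
  exact eq_of_chat_eq fun i _ => congrFun hseq i

lemma codeWeight_c3 (σ : Equiv.Perm (Fin (n + 1))) :
    codeWeight n (c3 σ) = MvPolynomial.X 0 ^ #(D3 σ) * MvPolynomial.X 1 ^ i3 σ := by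
  have hlast : c3 σ n = 0 := by have := c3_le σ n; omega
  rw [codeWeight, card_D3_eq, i3_eq_sum_c3, sum_range_succ, hlast, add_zero,
    show n + 1 - 2 = n - 1 by omega]

lemma codeWeight_chat (ω : Equiv.Perm (Fin n)) :
    codeWeight n (chat ω) = MvPolynomial.X 0 ^ #(altD ω) * MvPolynomial.X 1 ^ altInv ω := by
  rw [codeWeight, card_altD_eq, altInv_eq_sum_chat]

end LehmerCode

theorem stmt10 (n : ℕ) :
    ∑ σ ∈ (Finset.univ : Finset (Equiv.Perm (Fin (n + 1)))).filter (fun σ => σ 0 = 0),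
        (MvPolynomial.X 0 : MvPolynomial (Fin 2) ℚ) ^ ((D3 σ).card) *
          (MvPolynomial.X 1 : MvPolynomial (Fin 2) ℚ) ^ (i3 σ) =
      ∑ ω : Equiv.Perm (Fin n),
        (MvPolynomial.X 0 : MvPolynomial (Fin 2) ℚ) ^ ((altD ω).card) *
          (MvPolynomial.X 1 : MvPolynomial (Fin 2) ℚ) ^ (altInv ω) := by
  rw [sum_subtype (p := fun σ => σ 0 = 0) _ fun σ => by simp]
  refine (Fintype.sum_bijective _ (c3Code_bijective n) _ (fun c => codeWeight n (codeSeq c))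
    fun σ => ?_).trans (Fintype.sum_bijective _ (chatCode_bijective n) _ _ fun ω => ?_).symm
  · rw [codeSeq_c3Code, codeWeight_c3]
  · rw [codeSeq_chatCode, codeWeight_chat]
end

section
/- For ω ∈ Sₙ with ĉode(ω) = (a₁,...,a_{n−1}) and setting aₙ = 0, the alternating descent set of ω satisfies D̂(ω) = { i ∈ [n−1] : aᵢ + aᵢ₊₁ ≥ n − i }. -/
open Finset
open scoped Classical

theorem key (n : ℕ) (ω : Equiv.Perm (Fin n)) (i : ℕ) (h1 : i + 1 < n) :
    ((Even i ∧ ent ω (i + 1) < ent ω i) ∨ (¬ Even i ∧ ent ω i < ent ω (i + 1))) ↔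
      n - (i + 1) ≤ chat ω i + chat ω (i + 1) := by
  classical
  set A := (Finset.range n).filter (fun j => i < j ∧
    ((Even i ∧ ent ω j < ent ω i) ∨ (¬ Even i ∧ ent ω i < ent ω j))) with hAdef
  set B := (Finset.range n).filter (fun j => i + 1 < j ∧
    ((Even (i+1) ∧ ent ω j < ent ω (i+1)) ∨ (¬ Even (i+1) ∧ ent ω (i+1) < ent ω j))) with hBdef
  have hA : chat ω i = A.card := by simp [chat, hAdef]
  have hB : chat ω (i + 1) = B.card := by simp [chat, hBdef]
  set T := (Finset.range n).filter (fun j => i + 1 < j) with hTdef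
  have hT : T.card = n - (i + 2) := by
    have : T = Finset.Ico (i + 2) n := by ext j; simp [hTdef]; omega
    rw [this, Nat.card_Ico]
  have hmemA : ∀ j, j ∈ A ↔ j < n ∧ i < j ∧
      ((Even i ∧ ent ω j < ent ω i) ∨ (¬ Even i ∧ ent ω i < ent ω j)) := by
    intro j; simp [hAdef, and_assoc]
  have hmemB : ∀ j, j ∈ B ↔ j < n ∧ i + 1 < j ∧
      ((Even (i+1) ∧ ent ω j < ent ω (i+1)) ∨ (¬ Even (i+1) ∧ ent ω (i+1) < ent ω j)) := by
    intro j; simp [hBdef, and_assoc]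
  have hpar : Even (i + 1) ↔ ¬ Even i := Nat.even_add_one
  constructor
  · intro hd
    -- descent: show insert (i+1) T ⊆ A ∪ B
    have hsub : insert (i + 1) T ⊆ A ∪ B := by
      intro j hj
      rcases Finset.mem_insert.mp hj with rfl | hjT
      · exact Finset.mem_union_left _ ((hmemA _).mpr ⟨h1, Nat.lt_succ_self i, hd⟩)
      · simp only [hTdef, Finset.mem_filter, Finset.mem_range] at hjT
        obtain ⟨hjn, hij⟩ := hjT
        rcases hd with ⟨he, hba⟩ | ⟨ho, hab⟩
        · by_cases hc : ent ω j < ent ω i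
          · exact Finset.mem_union_left _ ((hmemA _).mpr ⟨hjn, by omega, Or.inl ⟨he, hc⟩⟩)
          · refine Finset.mem_union_right _ ((hmemB _).mpr ⟨hjn, hij, Or.inr ⟨?_, ?_⟩⟩)
            · simp [hpar, he]
            · exact lt_of_lt_of_le hba (le_of_not_gt hc)
        · by_cases hc : ent ω i < ent ω j
          · exact Finset.mem_union_left _ ((hmemA _).mpr ⟨hjn, by omega, Or.inr ⟨ho, hc⟩⟩)
          · refine Finset.mem_union_right _ ((hmemB _).mpr ⟨hjn, hij, Or.inl ⟨?_, ?_⟩⟩)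
            · exact hpar.mpr ho
            · exact lt_of_le_of_lt (le_of_not_gt hc) hab
    have hnot : i + 1 ∉ T := by simp [hTdef]
    have h2 : (insert (i + 1) T).card = T.card + 1 := Finset.card_insert_of_notMem hnot
    have h3 := Finset.card_le_card hsub
    have h4 := Finset.card_union_le A B
    omega
  · intro hcard
    by_contra hnd
    push_neg at hnd
    -- non-descent: A ∪ B ⊆ T and disjoint
    have hsub : A ∪ B ⊆ T := by
      intro j hj
      simp only [hTdef, Finset.mem_filter, Finset.mem_range]
      rcases Finset.mem_union.mp hj with hjA | hjB
      · obtain ⟨hjn, hij, hc⟩ := (hmemA _).mp hjA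
        refine ⟨hjn, ?_⟩
        rcases Nat.lt_or_ge (i + 1) j with h | h
        · exact h
        · exfalso
          have : j = i + 1 := by omega
          subst this
          rcases hc with ⟨he, hx⟩ | ⟨ho, hx⟩
          · exact absurd hx (not_lt.mpr (hnd.1 he))
          · exact absurd hx (not_lt.mpr (hnd.2 ho))
      · obtain ⟨hjn, hij, _⟩ := (hmemB _).mp hjB
        exact ⟨hjn, hij⟩
    have hdisj : Disjoint A B := by
      rw [Finset.disjoint_left]
      intro j hjA hjB
      obtain ⟨_, _, hcA⟩ := (hmemA _).mp hjA
      obtain ⟨_, _, hcB⟩ := (hmemB _).mp hjB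
      rcases Nat.even_or_odd i with he | ho
      · have ho1 : ¬ Even (i + 1) := by simp [hpar, he]
        rcases hcA with ⟨_, hxA⟩ | ⟨h, _⟩
        · rcases hcB with ⟨h, _⟩ | ⟨_, hxB⟩
          · exact ho1 h
          · exact absurd (lt_trans hxB hxA) (not_lt.mpr (hnd.1 he))
        · exact h he
      · have ho' : ¬ Even i := Nat.not_even_iff_odd.mpr ho
        have he1 : Even (i + 1) := hpar.mpr ho'
        rcases hcA with ⟨h, _⟩ | ⟨_, hxA⟩
        · exact ho' h
        · rcases hcB with ⟨_, hxB⟩ | ⟨h, _⟩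
          · exact absurd (lt_trans hxA hxB) (not_lt.mpr (hnd.2 ho'))
          · exact h he1
    have h2 : (A ∪ B).card = A.card + B.card := Finset.card_union_of_disjoint hdisj
    have h3 := Finset.card_le_card hsub
    omega

theorem stmt11 (n : ℕ) (ω : Equiv.Perm (Fin n)) :
    altD ω = (Finset.range (n - 1)).filter
      (fun i => n - (i + 1) ≤ chat ω i + chat ω (i + 1)) := by
  unfold altD
  apply Finset.filter_congr
  intro i hi
  simp only [Finset.mem_range] at hi
  have h1 : i + 1 < n := by omega
  simpa using key n ω i h1
end

section
/- For σ ∈ Sₙ, let σʳ be the permutation with entries (σʳ)ᵢ = n+1−σ_{n+1−i} (reverse-complement). Then i₃(1*σ) = maj(σʳ), the major index of σʳ. -/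
open Finset
open scoped Classical

/-- the reverse-complement `σʳ` as a word (0-based values and positions). -/
def revComp {n : ℕ} (σ : Equiv.Perm (Fin n)) : ℕ → ℕ :=
  fun i => n - 1 - ent σ (n - 1 - i)


lemma ind3' (a b c : ℕ) :
    ((if odd3 a b c then 1 else 0) + (if c < a then 1 else 0) : ℕ)
      = (if b < a then 1 else 0) + (if c < b then 1 else 0) := by
  unfold odd3
  split_ifs <;> simp_all <;> omega

def coI3 (m : ℕ) (f : ℕ → ℕ) : ℕ :=
  ∑ i ∈ Finset.range m, ∑ j ∈ Finset.range m,
    (if i + 1 < j ∧ odd3 (f i) (f (i + 1)) (f j) then 1 else 0)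

lemma i3f_eq_coI3 (m : ℕ) (f : ℕ → ℕ) : i3f m f = coI3 m f := by
  unfold i3f coI3
  rw [Finset.card_filter, Finset.sum_product]

lemma coI3_succ (m : ℕ) (f : ℕ → ℕ) :
    coI3 (m + 1) f
      = (∑ j ∈ Finset.range (m + 1), if 1 < j ∧ odd3 (f 0) (f 1) (f j) then 1 else 0)
        + coI3 m (fun i => f (i + 1)) := by
  unfold coI3
  rw [Finset.sum_range_succ', add_comm]
  congr 1
  refine Finset.sum_congr rfl fun i _ => ?_
  rw [Finset.sum_range_succ']
  simp [Nat.succ_lt_succ_iff]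

lemma key_comaj (m : ℕ) (f : ℕ → ℕ) :
    coI3 m f + (∑ t ∈ Finset.range m, if 1 ≤ t ∧ f t < f 0 then 1 else 0)
      = ∑ k ∈ Finset.range (m - 1), (if f (k + 1) < f k then m - 1 - k else 0) := by
  induction m generalizing f with
  | zero => simp [coI3]
  | succ m ih =>
    have IH := ih (fun i => f (i + 1))
    simp only [Nat.zero_add] at IH
    rw [coI3_succ]
    have hRHS : (∑ k ∈ Finset.range (m + 1 - 1), if f (k + 1) < f k then m + 1 - 1 - k else 0)
        = (if f 1 < f 0 then m else 0)
          + ∑ k ∈ Finset.range (m - 1), (if f (k + 1 + 1) < f (k + 1) then m - 1 - k else 0) := by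
      cases m with
      | zero => simp
      | succ p =>
        rw [show p + 1 + 1 - 1 = p + 1 from rfl, Finset.sum_range_succ', add_comm]
        congr 1
        refine Finset.sum_congr rfl fun k _ => ?_
        congr 1 <;> omega
    rw [hRHS]
    have hcount : (∑ t ∈ Finset.range (m + 1), if 1 ≤ t ∧ f 1 < f 0 then 1 else 0 : ℕ)
        = if f 1 < f 0 then m else 0 := by
      by_cases h : f 1 < f 0
      · rw [Finset.sum_range_succ']
        simp [h, Nat.succ_le_succ_iff]
      · simp [h]
    have hshift : (∑ t ∈ Finset.range (m + 1), if 2 ≤ t ∧ f t < f 1 then 1 else 0 : ℕ)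
        = ∑ t ∈ Finset.range m, if 1 ≤ t ∧ f (t + 1) < f 1 then 1 else 0 := by
      rw [Finset.sum_range_succ']
      simp [Nat.succ_le_succ_iff]
    have hpoint : (∑ j ∈ Finset.range (m + 1), if 1 < j ∧ odd3 (f 0) (f 1) (f j) then 1 else 0)
          + (∑ t ∈ Finset.range (m + 1), if 1 ≤ t ∧ f t < f 0 then 1 else 0)
        = (∑ t ∈ Finset.range (m + 1), if 1 ≤ t ∧ f 1 < f 0 then 1 else 0)
          + (∑ t ∈ Finset.range (m + 1), if 2 ≤ t ∧ f t < f 1 then 1 else 0) := by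
      rw [← Finset.sum_add_distrib, ← Finset.sum_add_distrib]
      refine Finset.sum_congr rfl fun j _ => ?_
      match j with
      | 0 => simp
      | 1 => simp
      | (j + 2) =>
        have t1 : 1 < j + 2 := by omega
        have t2 : 1 ≤ j + 2 := by omega
        have t3 : 2 ≤ j + 2 := by omega
        simp only [t1, t2, t3, true_and]
        exact ind3' (f 0) (f 1) (f (j + 2))
    omega

lemma ent_lt' {n : ℕ} (σ : Equiv.Perm (Fin n)) (x : ℕ) (hx : x < n) : ent σ x < n := by
  unfold ent
  rw [dif_pos hx]
  exact (σ ⟨x, hx⟩).isLt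


theorem stmt12 (n : ℕ) (σ : Equiv.Perm (Fin n)) :
    i3f (n + 1) (oneStar σ) = majf n (revComp σ) := by
  have hzero : (∑ t ∈ Finset.range (n + 1),
      if 1 ≤ t ∧ oneStar σ t < oneStar σ 0 then 1 else 0 : ℕ) = 0 :=
    Finset.sum_eq_zero fun t _ => by simp [oneStar]
  have hk := key_comaj (n + 1) (oneStar σ)
  rw [hzero, add_zero] at hk
  rw [i3f_eq_coI3, hk, majf, Finset.sum_filter]
  cases n with
  | zero => simp
  | succ p =>
    rw [show p + 1 + 1 - 1 = p + 1 from rfl, Finset.sum_range_succ']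
    have h0 : (if oneStar σ (0 + 1) < oneStar σ 0 then p + 1 - 0 else 0) = 0 := by
      simp [oneStar]
    rw [h0, add_zero]
    refine Finset.sum_nbij' (fun k => p - 1 - k) (fun k => p - 1 - k) ?_ ?_ ?_ ?_ ?_
    · intro a ha; simp only [Finset.mem_range] at *; omega
    · intro a ha; simp only [Finset.mem_range] at *; omega
    · intro a ha; simp only [Finset.mem_range] at ha; omega
    · intro a ha; simp only [Finset.mem_range] at ha; omega
    · intro k hk
      have hkp : k < p := Finset.mem_range.mp hk
      have b1 : ent σ k < p + 1 := ent_lt' σ k (by omega)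
      have b2 : ent σ (k + 1) < p + 1 := ent_lt' σ (k + 1) (by omega)
      have o1 : oneStar σ (k + 1) = ent σ k + 1 := by simp [oneStar]
      have o2 : oneStar σ (k + 1 + 1) = ent σ (k + 1) + 1 := by simp [oneStar]
      have rc1 : revComp σ (p - 1 - k + 1) = p - ent σ k := by
        unfold revComp
        rw [show p + 1 - 1 - (p - 1 - k + 1) = k by omega]
        omega
      have rc2 : revComp σ (p - 1 - k) = p - ent σ (k + 1) := by
        unfold revComp
        rw [show p + 1 - 1 - (p - 1 - k) = k + 1 by omega]
        omega
      rw [o1, o2, rc1, rc2]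
      by_cases hlt : ent σ (k + 1) < ent σ k
      · rw [if_pos (by omega), if_pos (by omega)]
        omega
      · rw [if_neg (by omega), if_neg (by omega)]
end

section
/- For every subset S ⊆ [n−1] with co(S) = (γ₁,...,γₖ₊₁) the composition of n given by consecutive differences of elements of S (with endpoints 0 and n), the number of permutations σ ∈ Sₙ with alternating descent set contained in S equals the multinomial coefficient n!/(γ₁!⋯γₖ₊₁!) times the product E_{γ₁}⋯E_{γₖ₊₁} of Euler numbers. -/
open Finset
open scoped Classical

/-!
Cut `[n]` into consecutive blocks of lengths `γ₁, …, γₖ₊₁`. Every permutation factors uniquely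
as a permutation inside each block followed by a permutation increasing on each block, and there
are `n! / ∏ γᵢ!` of the latter. The elements of `[n-1] ∖ S` are exactly the positions followed by
a position of the same block, where `σ` compares as its block component does; so `D̂(σ) ⊆ S`
says that each block component is up-down or down-up, according to the parity of the block's
first position. Complementing values exchanges the two kinds, so each block contributes `E_{γᵢ}`.
-/

open Equiv

lemma ent_of_lt {n : ℕ} (σ : Perm (Fin n)) {i : ℕ} (h : i < n) : ent σ i = σ ⟨i, h⟩ :=
  dif_pos h

lemma ent_ne_ent {n : ℕ} (σ : Perm (Fin n)) {i j : ℕ} (hi : i < n) (hj : j < n) (hij : i ≠ j) :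
    ent σ i ≠ ent σ j := by
  rw [ent_of_lt σ hi, ent_of_lt σ hj, Ne, Fin.val_inj, σ.injective.eq_iff, Fin.mk.injEq]
  exact hij

lemma ent_lt_s13 {n : ℕ} (σ : Perm (Fin n)) {i : ℕ} (h : i < n) : ent σ i < n := by
  rw [ent_of_lt σ h]
  exact (σ _).isLt

lemma ent_revPerm_mul {n : ℕ} (σ : Perm (Fin n)) {i : ℕ} (h : i < n) :
    ent (Fin.revPerm * σ) i = n - 1 - ent σ i := by
  rw [ent_of_lt _ h, ent_of_lt σ h, Perm.mul_apply, Fin.revPerm_apply, Fin.val_rev]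
  omega

def AltLt (q x y : ℕ) : Prop :=
  (Even q ∧ x < y) ∨ (¬ Even q ∧ y < x)

lemma altLt_succ_s13 {q x y : ℕ} : AltLt (q + 1) x y ↔ AltLt q y x := by
  simp only [AltLt, Nat.even_add_one]
  tauto

lemma not_altLt_iff {q x y : ℕ} (h : x ≠ y) : ¬ AltLt q x y ↔ AltLt q y x := by
  unfold AltLt
  by_cases hq : Even q <;>
    simp only [hq, true_and, false_and, or_false, false_or, not_true, not_false_eq_true] <;> omega

lemma altLt_sub_sub {q m x y : ℕ} (hx : x < m) (hy : y < m) :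
    AltLt q (m - 1 - x) (m - 1 - y) ↔ AltLt q y x := by
  have h₁ : m - 1 - x < m - 1 - y ↔ y < x := by omega
  have h₂ : m - 1 - y < m - 1 - x ↔ x < y := by omega
  rw [AltLt, AltLt, h₁, h₂]

lemma mem_altD_iff {n : ℕ} {σ : Perm (Fin n)} {p : ℕ} :
    p ∈ altD σ ↔ p + 1 < n ∧ AltLt p (ent σ (p + 1)) (ent σ p) := by
  rw [altD, Finset.mem_filter, Finset.mem_range, Nat.lt_sub_iff_add_lt]
  rfl

def IsAltFrom (p : ℕ) {m : ℕ} (τ : Perm (Fin m)) : Prop :=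
  ∀ a, a + 1 < m → AltLt (p + a) (ent τ a) (ent τ (a + 1))

lemma isAltFrom_succ_revPerm_mul_iff {p m : ℕ} {τ : Perm (Fin m)} :
    IsAltFrom (p + 1) (Fin.revPerm * τ) ↔ IsAltFrom p τ := by
  refine forall₂_congr fun a ha => ?_
  rw [ent_revPerm_mul τ (by omega), ent_revPerm_mul τ ha, Nat.add_right_comm, altLt_succ_s13,
    altLt_sub_sub (ent_lt_s13 τ ha) (ent_lt_s13 τ (by omega))]

lemma card_filter_isAltFrom (p m : ℕ) :
    #(univ.filter (IsAltFrom p (m := m))) = EulerNum m := by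
  induction p with
  | zero =>
    unfold EulerNum IsAltFrom AltLt
    congr 1
    ext τ
    simp only [mem_filter, mem_univ, true_and, zero_add, Finset.mem_range, Nat.lt_sub_iff_add_lt]
  | succ p ih =>
    rw [← ih]
    refine (card_equiv (Equiv.mulLeft Fin.revPerm) fun τ => ?_).symm
    simp only [mem_filter, mem_univ, true_and, coe_mulLeft, isAltFrom_succ_revPerm_mul_iff]

section Shuffle

variable {ι α : Type*} {g : ι → ℕ} (e : (Σ i, Fin (g i)) ≃ α)

def blockPerm (v : ∀ i, Perm (Fin (g i))) : Perm α :=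
  e.permCongr (sigmaCongrRight v)

@[simp]
lemma blockPerm_apply (v : ∀ i, Perm (Fin (g i))) (i : ι) (a : Fin (g i)) :
    blockPerm e v (e ⟨i, a⟩) = e ⟨i, v i a⟩ := by
  simp [blockPerm, permCongr_apply]

lemma blockPerm_inv (v : ∀ i, Perm (Fin (g i))) :
    (blockPerm e v)⁻¹ = blockPerm e fun i => (v i)⁻¹ := by
  ext x
  obtain ⟨⟨i, a⟩, rfl⟩ := e.surjective x
  rw [Perm.inv_eq_iff_eq, blockPerm_apply, blockPerm_apply]
  simp

variable [LinearOrder α]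

def IsBlockMono (u : Perm α) : Prop :=
  ∀ i, StrictMono fun a : Fin (g i) => u (e ⟨i, a⟩)

/-- The standardization of `σ` on block `i`. -/
noncomputable def blockStd (σ : Perm α) (i : ι) : Perm (Fin (g i)) :=
  (Tuple.sort fun a => σ (e ⟨i, a⟩))⁻¹

lemma isBlockMono_mul_inv_blockPerm_blockStd (σ : Perm α) :
    IsBlockMono e (σ * (blockPerm e (blockStd e σ))⁻¹) := by
  intro i
  have hinj : Function.Injective fun a : Fin (g i) => σ (e ⟨i, a⟩) :=
    fun a b h => by simpa using e.injective (σ.injective h)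
  convert (Tuple.monotone_sort _).strictMono_of_injective
    (hinj.comp (Tuple.sort fun a => σ (e ⟨i, a⟩)).injective) using 1
  ext a
  simp [blockPerm_inv, blockStd]

lemma blockStd_mul_blockPerm {u : Perm α} (hu : IsBlockMono e u) (v : ∀ i, Perm (Fin (g i))) :
    blockStd e (u * blockPerm e v) = v := by
  funext i
  rw [blockStd, inv_eq_iff_eq_inv, eq_comm, Tuple.eq_sort_iff]
  simp only [Function.comp_def, Perm.mul_apply, blockPerm_apply, Perm.coe_inv, apply_symm_apply]
  exact ⟨(hu i).monotone, fun a b hab h => absurd ((hu i).injective h) hab.ne⟩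

noncomputable def shuffleEquiv :
    (∀ i, Perm (Fin (g i))) × {u : Perm α // IsBlockMono e u} ≃ Perm α where
  toFun x := x.2 * blockPerm e x.1
  invFun σ := (blockStd e σ, ⟨_, isBlockMono_mul_inv_blockPerm_blockStd e σ⟩)
  left_inv := by
    rintro ⟨v, u, hu⟩
    simp [blockStd_mul_blockPerm e hu]
  right_inv σ := inv_mul_cancel_right σ _

lemma card_filter_mul_prod_factorial [Fintype ι] [DecidableEq ι] [Fintype α]
    (Q : Perm α → Prop) [DecidablePred Q] (P : ∀ i, Perm (Fin (g i)) → Prop)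
    [∀ i, DecidablePred (P i)]
    (hQ : ∀ v u, IsBlockMono e u → (Q (u * blockPerm e v) ↔ ∀ i, P i (v i))) :
    #(univ.filter Q) * ∏ i, (g i).factorial =
      (∏ i, #(univ.filter (P i))) * (Fintype.card α).factorial := by
  have hall : (Fintype.card α).factorial =
      (∏ i, (g i).factorial) * Nat.card {u : Perm α // IsBlockMono e u} := by
    rw [← Nat.card_eq_fintype_card, ← Nat.card_perm, ← Nat.card_congr (shuffleEquiv e),
      Nat.card_prod, Nat.card_pi]
    simp only [Nat.card_perm, Nat.card_fin]
  have hQ : #(univ.filter Q) =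
      (∏ i, Nat.card {w // P i w}) * Nat.card {u : Perm α // IsBlockMono e u} := by
    rw [← Fintype.card_subtype, ← Nat.card_eq_fintype_card,
      ← Nat.card_congr ((shuffleEquiv e).subtypeEquiv fun x => (hQ x.1 x.2 x.2.2).symm),
      Nat.card_congr (prodSubtypeFstEquivSubtypeProd (p := fun v : ∀ i, Perm (Fin (g i)) =>
        ∀ i, P i (v i))),
      Nat.card_prod, Nat.card_congr subtypePiEquivPi, Nat.card_pi]
  rw [hall, hQ]
  simp only [Nat.card_eq_fintype_card, Fintype.card_subtype]
  ring

end Shuffle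

section Blocks

variable {n k : ℕ} {g : ℕ → ℕ}

def blockStart (g : ℕ → ℕ) (i : ℕ) : ℕ :=
  ∑ j ∈ range i, g j

lemma blockStart_succ (g : ℕ → ℕ) (i : ℕ) : blockStart g (i + 1) = blockStart g i + g i :=
  sum_range_succ g i

lemma blockStart_mono (g : ℕ → ℕ) : Monotone (blockStart g) := fun _ _ h =>
  sum_le_sum_of_subset (range_subset_range.2 h)

lemma blockStart_add_lt {i j a : ℕ} (hij : i < j) (ha : a < g i) :
    blockStart g i + a < blockStart g j :=
  calc blockStart g i + a < blockStart g (i + 1) := by rw [blockStart_succ]; omega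
    _ ≤ blockStart g j := blockStart_mono g hij

lemma blockStart_add_inj {i j a b : ℕ} (ha : a < g i) (hb : b < g j)
    (h : blockStart g i + a = blockStart g j + b) : i = j ∧ a = b := by
  rcases lt_trichotomy i j with hij | rfl | hij
  · have := blockStart_add_lt hij ha
    omega
  · omega
  · have := blockStart_add_lt hij hb
    omega

lemma blockStart_add_lt_of_le (hsum : ∑ i ∈ range (k + 1), g i = n) {i a : ℕ} (hi : i ≤ k)
    (ha : a < g i) : blockStart g i + a < n :=
  hsum ▸ blockStart_add_lt (Nat.lt_succ_of_le hi) ha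

def blockEquiv (hsum : ∑ i ∈ range (k + 1), g i = n) : (Σ i : Fin (k + 1), Fin (g i)) ≃ Fin n :=
  finSigmaFinEquiv.trans (finCongr (by rwa [Fin.sum_univ_eq_sum_range (g ·)]))

lemma blockEquiv_val (hsum : ∑ i ∈ range (k + 1), g i = n) (i : Fin (k + 1)) (a : Fin (g i)) :
    (blockEquiv hsum ⟨i, a⟩ : ℕ) = blockStart g i + a := by
  rw [blockEquiv, trans_apply, finCongr_apply, Fin.val_cast, finSigmaFinEquiv_apply, blockStart,
    ← Fin.sum_univ_eq_sum_range]
  rfl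

lemma add_mem_blockEnds_iff (hpos : ∀ i ∈ range (k + 1), 1 ≤ g i)
    (hsum : ∑ i ∈ range (k + 1), g i = n) {i a : ℕ} (ha : a < g i)
    (hn : blockStart g i + a + 1 < n) :
    blockStart g i + a ∈ (range k).image (fun j => blockStart g (j + 1) - 1) ↔ a + 1 = g i := by
  have hend : blockStart g (k + 1) = n := hsum
  simp only [mem_image, mem_range]
  constructor
  · rintro ⟨j, hj, hji⟩
    have hj' : blockStart g j + (g j - 1) = blockStart g i + a := by
      have := blockStart_succ g j
      have := hpos j (mem_range.2 (by omega))
      omega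
    obtain ⟨rfl, rfl⟩ := blockStart_add_inj (by have := hpos j (mem_range.2 (by omega)); omega)
      ha hj'
    omega
  · intro hlast
    refine ⟨i, ?_, by rw [blockStart_succ]; omega⟩
    by_contra hik
    have := blockStart_mono g (show k + 1 ≤ i + 1 by omega)
    have := blockStart_succ g i
    omega

end Blocks

section AltDescents

variable {n k : ℕ} {g : ℕ → ℕ} (hsum : ∑ i ∈ range (k + 1), g i = n)

lemma ent_mul_blockPerm_lt_iff {u : Perm (Fin n)} (hu : IsBlockMono (blockEquiv hsum) u)
    (v : ∀ i : Fin (k + 1), Perm (Fin (g i))) (i : Fin (k + 1)) {a b : ℕ} (ha : a < g i)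
    (hb : b < g i) :
    ent (u * blockPerm (blockEquiv hsum) v) (blockStart g i + a) <
        ent (u * blockPerm (blockEquiv hsum) v) (blockStart g i + b) ↔
      ent (v i) a < ent (v i) b := by
  have hent : ∀ c (hc : c < g i), ent (u * blockPerm (blockEquiv hsum) v) (blockStart g i + c) =
      u (blockEquiv hsum ⟨i, v i ⟨c, hc⟩⟩) := by
    intro c hc
    rw [ent_of_lt _ (blockStart_add_lt_of_le hsum i.is_le hc)]
    simp_rw [← blockEquiv_val hsum i ⟨c, hc⟩, Fin.eta, Perm.mul_apply, blockPerm_apply]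
  rw [hent a ha, hent b hb, ent_of_lt _ ha, ent_of_lt _ hb, ← Fin.lt_def, ← Fin.lt_def,
    (hu i).lt_iff_lt]

lemma altD_mul_blockPerm_subset_iff (hpos : ∀ i ∈ range (k + 1), 1 ≤ g i) {u : Perm (Fin n)}
    (hu : IsBlockMono (blockEquiv hsum) u) (v : ∀ i : Fin (k + 1), Perm (Fin (g i))) :
    altD (u * blockPerm (blockEquiv hsum) v) ⊆
        (range k).image (fun j => blockStart g (j + 1) - 1) ↔
      ∀ i : Fin (k + 1), IsAltFrom (blockStart g i) (v i) := by
  set σ := u * blockPerm (blockEquiv hsum) v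
  have hdesc : ∀ (i : Fin (k + 1)) a, a + 1 < g i →
      (AltLt (blockStart g i + a) (ent σ (blockStart g i + a + 1)) (ent σ (blockStart g i + a)) ↔
        ¬ AltLt (blockStart g i + a) (ent (v i) a) (ent (v i) (a + 1))) := by
    intro i a ha
    rw [not_altLt_iff (ent_ne_ent _ (by omega) ha (by omega)), AltLt, AltLt, add_assoc,
      ent_mul_blockPerm_lt_iff hsum hu v i ha (by omega),
      ent_mul_blockPerm_lt_iff hsum hu v i (by omega) ha]
  constructor
  · intro h i a ha
    by_contra hfail
    have hn := blockStart_add_lt_of_le hsum i.is_le ha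
    rw [← add_assoc] at hn
    have hmem := h (mem_altD_iff.2 ⟨hn, (hdesc i a ha).2 hfail⟩)
    have := (add_mem_blockEnds_iff hpos hsum (by omega) hn).1 hmem
    omega
  · intro h p hp
    obtain ⟨hpn, hdp⟩ := mem_altD_iff.1 hp
    obtain ⟨⟨i, a⟩, hia⟩ := (blockEquiv hsum).surjective ⟨p, by omega⟩
    obtain rfl : p = blockStart g i + a := by rw [← blockEquiv_val hsum, hia]
    rw [add_mem_blockEnds_iff hpos hsum a.isLt hpn]
    by_contra hne
    have ha : (a : ℕ) + 1 < g i := by omega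
    exact (hdesc i a ha).1 hdp (h i a ha)

end AltDescents

theorem stmt13 (n k : ℕ) (g : ℕ → ℕ)
    (hpos : ∀ i ∈ Finset.range (k + 1), 1 ≤ g i)
    (hsum : ∑ i ∈ Finset.range (k + 1), g i = n) :
    ((Finset.univ : Finset (Equiv.Perm (Fin n))).filter (fun σ =>
        altD σ ⊆ (Finset.range k).image (fun i => (∑ j ∈ Finset.range (i + 1), g j) - 1))).card *
      ∏ i ∈ Finset.range (k + 1), Nat.factorial (g i) =
    Nat.factorial n * ∏ i ∈ Finset.range (k + 1), EulerNum (g i) := by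
  have key := card_filter_mul_prod_factorial (blockEquiv hsum)
    (fun σ => altD σ ⊆ (range k).image fun j => blockStart g (j + 1) - 1)
    (fun i => IsAltFrom (blockStart g i))
    (fun v _ hu => altD_mul_blockPerm_subset_iff hsum hpos hu v)
  simp only [card_filter_isAltFrom, Fintype.card_fin,
    Fin.prod_univ_eq_prod_range (fun i => (g i).factorial),
    Fin.prod_univ_eq_prod_range (fun i => EulerNum (g i))] at key
  exact key.trans (mul_comm _ _)
end

section
/- For all n ≥ k ≥ 0: ∑_{i=0}^{n} ∑_{j=0}^{k} C(n,i)·Â(i,j+1)·Â(n−i,k−j+1) = (n+1−k)·Â(n,k+1) + (k+1)·Â(n,k+2), where Â(m,r) is the number of permutations of [m] with exactly r−1 alternating descents (with Â(0,1)=1 and Â(m,r)=0 for r ≤ 0 or r > max(m,1)). -/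
/-!
Both sides count pairs `(π, c)` of a permutation `π ∈ Sₙ` and a cut point `0 ≤ c ≤ n` such that
`π` has `k` alternating descents besides, possibly, one straddling the cut. Cutting `π` at `c`
and standardizing both blocks (complementing the second one when `c` is odd, so that the parity of
positions is preserved) is a bijection from `Sₙ` onto triples `(A, σ, τ)` with `A` a `c`-subset
of values, `σ ∈ S_c`, `τ ∈ S_{n-c}`, under which the alternating descents of `π` are those of `σ`,
those of `τ`, and possibly the one at the cut: this gives the left-hand side. For a fixed `π` with
`d` alternating descents, `d` of the `n + 1` cuts break one and `n + 1 - d` do not: this gives the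
right-hand side.
-/

open Finset
open scoped Classical

open Equiv

lemma card_filter_eq_add_ite_mem {α : Type*} [DecidableEq α] {S T : Finset α} (hTS : T ⊆ S)
    (d k : ℕ) :
    #{x ∈ S | d = k + if x ∈ T then 1 else 0} =
      (if d = k then #S - #T else 0) + (if d = k + 1 then #T else 0) := by
  by_cases hk : d = k
  · subst hk
    rw [filter_congr (q := (· ∉ T)) fun x _ => by simp, ← sdiff_eq_filter, card_sdiff_of_subset hTS]
    simp
  by_cases hk1 : d = k + 1
  · subst hk1
    rw [filter_congr (q := (· ∈ T)) fun x _ => by simp, filter_mem_eq_inter, inter_eq_right.mpr hTS]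
    simp
  · rw [filter_false_of_mem fun x _ => by split_ifs <;> omega]
    simp [hk, hk1]

lemma card_filter_fst_add_snd_eq {α β : Type*} [Fintype α] [Fintype β] (f : α → ℕ) (g : β → ℕ)
    (k : ℕ) :
    #{x : α × β | f x.1 + g x.2 = k} =
      ∑ a ∈ range (k + 1), #{x | f x = a} * #{y | g y = k - a} := by
  rw [card_eq_sum_card_fiberwise (f := fun x => f x.1) (t := range (k + 1))
    fun x hx => by simp at hx ⊢; omega]
  refine sum_congr rfl fun a ha => ?_
  rw [filter_filter, ← card_product, ← filter_product, univ_product_univ]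
  congr 1
  ext ⟨x, y⟩
  simp only [mem_filter, mem_univ, true_and]
  have := mem_range.mp ha
  omega

lemma card_eq_card_filter_lt_add_cut_add_card_filter_ge (s : Finset ℕ) (i : ℕ) :
    #s = #(s.filter (· + 1 < i)) + (if i ∈ s.map (addRightEmbedding 1) then 1 else 0) +
      #(s.filter (i ≤ ·)) := by
  have hcut : #(s.filter (· + 1 = i)) = if i ∈ s.map (addRightEmbedding 1) then 1 else 0 := by
    calc #(s.filter (· + 1 = i)) = #((s.map (addRightEmbedding 1)).filter (· = i)) := by
          rw [filter_map, card_map]; rfl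
      _ = _ := by rw [filter_eq']; split_ifs <;> rfl
  rw [← hcut, card_filter, card_filter, card_filter, ← sum_add_distrib, ← sum_add_distrib,
    card_eq_sum_ones]
  refine sum_congr rfl fun p _ => ?_
  split_ifs <;> omega

def AltDescentAt (f : ℕ → ℕ) (p : ℕ) : Prop :=
  (Even p ∧ f (p + 1) < f p) ∨ (¬ Even p ∧ f p < f (p + 1))

lemma altD_eq_filter {n : ℕ} (π : Perm (Fin n)) :
    altD π = (range (n - 1)).filter (AltDescentAt (ent π)) := by
  ext; simp [altD, AltDescentAt]

lemma ent_coe {n : ℕ} (π : Perm (Fin n)) (p : Fin n) : ent π p = π p := by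
  simp [ent]

lemma Ahat_succ (m r : ℕ) : Ahat m (r + 1) = #{σ : Perm (Fin m) | #(altD σ) = r} := by
  simp [Ahat]

/-- `c ∈ altDescentCuts π` iff the (0-indexed) positions `c - 1, c` form an alternating descent,
i.e. cutting `π` before position `c` breaks an alternating descent. -/
def altDescentCuts {n : ℕ} (π : Perm (Fin n)) : Finset ℕ :=
  (altD π).map (addRightEmbedding 1)

lemma altDescentCuts_subset_range {n : ℕ} (π : Perm (Fin n)) :
    altDescentCuts π ⊆ range (n + 1) := by
  intro c hc
  simp only [altDescentCuts, altD, mem_map, mem_filter, mem_range, addRightEmbedding_apply] at hc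
  obtain ⟨p, ⟨hp, -⟩, rfl⟩ := hc
  exact mem_range.mpr (by omega)

lemma card_filter_range_altD_eq_add_ite_cut {n : ℕ} (π : Perm (Fin n)) (k : ℕ) :
    #{i ∈ range (n + 1) | #(altD π) = k + if i ∈ altDescentCuts π then 1 else 0} =
      (if #(altD π) = k then n + 1 - k else 0) + (if #(altD π) = k + 1 then k + 1 else 0) := by
  rw [card_filter_eq_add_ite_mem (altDescentCuts_subset_range π), card_range, altDescentCuts,
    card_map]
  split_ifs <;> omega

section Glue

variable {i j : ℕ}

/-- When the first block has odd length, positions in the second block change parity; complementing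
the values of `τ` turns its alternating descents into those of the shifted block. -/
def complIfOdd (i : ℕ) {m : ℕ} (τ : Perm (Fin m)) : Perm (Fin m) :=
  if Even i then τ else τ.trans Fin.revPerm

lemma complIfOdd_complIfOdd (i : ℕ) {m : ℕ} (τ : Perm (Fin m)) :
    complIfOdd i (complIfOdd i τ) = τ := by
  unfold complIfOdd
  split_ifs <;> ext <;> simp

lemma complIfOdd_lt_iff {m : ℕ} (τ : Perm (Fin m)) (a b : Fin m) :
    complIfOdd i τ a < complIfOdd i τ b ↔ if Even i then τ a < τ b else τ b < τ a := by
  unfold complIfOdd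
  split_ifs <;> simp

def blockValues (A : {A : Finset (Fin (i + j)) // #A = i}) : Fin i ⊕ Fin j ≃ Fin (i + j) :=
  ((A.1.orderIsoOfFin A.2).toEquiv.sumCongr
      ((A.1ᶜ.orderIsoOfFin (by simp [card_compl, A.2])).toEquiv.trans
        (subtypeEquivRight fun _ => mem_compl))).trans
    (sumCompl (· ∈ A.1))

variable (A : {A : Finset (Fin (i + j)) // #A = i})

lemma blockValues_inl (a : Fin i) :
    blockValues A (.inl a) = A.1.orderEmbOfFin A.2 a := by
  simp [blockValues]

lemma blockValues_inl_lt_inl {a b : Fin i} :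
    blockValues A (.inl a) < blockValues A (.inl b) ↔ a < b := by
  simp [blockValues_inl]

lemma blockValues_inr_lt_inr {a b : Fin j} :
    blockValues A (.inr a) < blockValues A (.inr b) ↔ a < b := by
  simp [blockValues]

/-- The first `i` entries of `glue A σ τ` are order-isomorphic to `σ` and take the values `A`; the
last `j` are order-isomorphic to `complIfOdd i τ` and take the values `Aᶜ`. -/
def glue (σ : Perm (Fin i)) (τ : Perm (Fin j)) : Perm (Fin (i + j)) :=
  finSumFinEquiv.symm.trans ((σ.sumCongr (complIfOdd i τ)).trans (blockValues A))

variable (σ : Perm (Fin i)) (τ : Perm (Fin j))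

lemma glue_castAdd (p : Fin i) :
    glue A σ τ (Fin.castAdd j p) = blockValues A (.inl (σ p)) := by
  simp [glue]

lemma glue_natAdd (q : Fin j) :
    glue A σ τ (Fin.natAdd i q) = blockValues A (.inr (complIfOdd i τ q)) := by
  simp [glue]

lemma ent_glue_lt_ent_glue_left {p p' : ℕ} (hp : p < i) (hp' : p' < i) :
    ent (glue A σ τ) p < ent (glue A σ τ) p' ↔ ent σ p < ent σ p' := by
  lift p to Fin i using hp
  lift p' to Fin i using hp'
  rw [show (p : ℕ) = Fin.castAdd j p from rfl, show (p' : ℕ) = Fin.castAdd j p' from rfl,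
    ent_coe, ent_coe, glue_castAdd, glue_castAdd, Fin.val_castAdd, Fin.val_castAdd, ent_coe,
    ent_coe, Fin.val_fin_lt, Fin.val_fin_lt, blockValues_inl_lt_inl]

lemma ent_glue_lt_ent_glue_right {q q' : ℕ} (hq : q < j) (hq' : q' < j) :
    ent (glue A σ τ) (i + q) < ent (glue A σ τ) (i + q') ↔
      if Even i then ent τ q < ent τ q' else ent τ q' < ent τ q := by
  lift q to Fin j using hq
  lift q' to Fin j using hq'
  rw [show i + (q : ℕ) = Fin.natAdd i q from rfl, show i + (q' : ℕ) = Fin.natAdd i q' from rfl,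
    ent_coe, ent_coe, glue_natAdd, glue_natAdd, ent_coe, ent_coe, Fin.val_fin_lt,
    blockValues_inr_lt_inr, complIfOdd_lt_iff, Fin.val_fin_lt, Fin.val_fin_lt]

lemma altDescentAt_glue_left {p : ℕ} (hp : p + 1 < i) :
    AltDescentAt (ent (glue A σ τ)) p ↔ AltDescentAt (ent σ) p := by
  simp only [AltDescentAt, ent_glue_lt_ent_glue_left A σ τ (p := p) (p' := p + 1) (by omega) hp,
    ent_glue_lt_ent_glue_left A σ τ (p := p + 1) (p' := p) hp (by omega)]

lemma altDescentAt_glue_right {q : ℕ} (hq : q + 1 < j) :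
    AltDescentAt (ent (glue A σ τ)) (i + q) ↔ AltDescentAt (ent τ) q := by
  have h := ent_glue_lt_ent_glue_right A σ τ (q := q) (q' := q + 1) (by omega) hq
  have h' := ent_glue_lt_ent_glue_right A σ τ (q := q + 1) (q' := q) hq (by omega)
  simp only [AltDescentAt, Nat.even_add, add_assoc, h, h']
  split_ifs <;> tauto

lemma altD_glue_filter_left : (altD (glue A σ τ)).filter (· + 1 < i) = altD σ := by
  ext p
  simp only [altD_eq_filter, mem_filter, mem_range]
  constructor
  · rintro ⟨⟨-, hd⟩, hp⟩
    exact ⟨by omega, (altDescentAt_glue_left A σ τ hp).mp hd⟩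
  · rintro ⟨hp, hd⟩
    exact ⟨⟨by omega, (altDescentAt_glue_left A σ τ (by omega)).mpr hd⟩, by omega⟩

lemma altD_glue_filter_right :
    (altD (glue A σ τ)).filter (i ≤ ·) = (altD τ).map (addLeftEmbedding i) := by
  ext p
  simp only [altD_eq_filter, mem_filter, mem_range, mem_map, addLeftEmbedding_apply]
  constructor
  · rintro ⟨⟨hp, hd⟩, hip⟩
    obtain ⟨q, rfl⟩ := Nat.exists_eq_add_of_le hip
    exact ⟨q, ⟨by omega, (altDescentAt_glue_right A σ τ (by omega)).mp hd⟩, rfl⟩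
  · rintro ⟨q, ⟨hq, hd⟩, rfl⟩
    exact ⟨⟨by omega, (altDescentAt_glue_right A σ τ (by omega)).mpr hd⟩, by omega⟩

lemma card_altD_glue : #(altD (glue A σ τ)) =
    #(altD σ) + #(altD τ) + if i ∈ altDescentCuts (glue A σ τ) then 1 else 0 := by
  rw [card_eq_card_filter_lt_add_cut_add_card_filter_ge _ i, altD_glue_filter_left,
    altD_glue_filter_right, card_map, altDescentCuts]
  ring

lemma range_glue_castAdd :
    Set.range (fun p : Fin i => glue A σ τ (Fin.castAdd j p)) = A.1 := by
  simp only [glue_castAdd, blockValues_inl]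
  exact (EquivLike.range_comp (A.1.orderEmbOfFin A.2) σ).trans (range_orderEmbOfFin _ _)

lemma glue_injective : Function.Injective
    (fun x : {A : Finset (Fin (i + j)) // #A = i} × Perm (Fin i) × Perm (Fin j) =>
      glue x.1 x.2.1 x.2.2) := by
  rintro ⟨A, σ, τ⟩ ⟨A', σ', τ'⟩ h
  simp only at h
  obtain rfl : A = A' := Subtype.ext <| Finset.coe_injective <| by
    rw [← range_glue_castAdd A σ τ, ← range_glue_castAdd A' σ' τ', h]
  have hσ : σ = σ' := Equiv.ext fun p => Sum.inl_injective <| (blockValues A).injective <| by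
    rw [← glue_castAdd, ← glue_castAdd, h]
  have hτ : complIfOdd i τ = complIfOdd i τ' := Equiv.ext fun q =>
    Sum.inr_injective <| (blockValues A).injective <| by rw [← glue_natAdd, ← glue_natAdd, h]
  rw [hσ, ← complIfOdd_complIfOdd i τ, hτ, complIfOdd_complIfOdd]

end Glue

noncomputable def glueEquiv (i j : ℕ) :
    {A : Finset (Fin (i + j)) // #A = i} × Perm (Fin i) × Perm (Fin j) ≃ Perm (Fin (i + j)) :=
  .ofBijective _ <| (Fintype.bijective_iff_injective_and_card _).mpr ⟨glue_injective, by
    simp only [Fintype.card_prod, Fintype.card_finset_len, Fintype.card_perm, Fintype.card_fin]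
    rw [Nat.choose_symm_add, ← mul_assoc, Nat.add_choose_mul_factorial_mul_factorial]⟩

lemma card_altD_eq_add_ite_cut {n i : ℕ} (hi : i ≤ n) (k : ℕ) :
    #{π : Perm (Fin n) | #(altD π) = k + if i ∈ altDescentCuts π then 1 else 0} =
      n.choose i * ∑ a ∈ range (k + 1), Ahat i (a + 1) * Ahat (n - i) (k - a + 1) := by
  obtain ⟨j, rfl⟩ := Nat.exists_eq_add_of_le hi
  rw [Nat.add_sub_cancel_left]
  calc #{π : Perm (Fin (i + j)) | #(altD π) = k + if i ∈ altDescentCuts π then 1 else 0}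
      = #{x : {A : Finset (Fin (i + j)) // #A = i} × Perm (Fin i) × Perm (Fin j) |
          #(altD x.2.1) + #(altD x.2.2) = k} := by
        simp only [card_filter, ← (glueEquiv i j).sum_comp]
        refine sum_congr rfl fun x _ => ?_
        simp only [glueEquiv, Equiv.ofBijective_apply, card_altD_glue]
        split_ifs <;> omega
    _ = (i + j).choose i * #{y : Perm (Fin i) × Perm (Fin j) | #(altD y.1) + #(altD y.2) = k} := by
        rw [← univ_product_univ,
          filter_product_right fun y : Perm (Fin i) × Perm (Fin j) => #(altD y.1) + #(altD y.2) = k,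
          card_product, card_univ, Fintype.card_finset_len, Fintype.card_fin]
    _ = _ := by
        rw [card_filter_fst_add_snd_eq (fun σ : Perm (Fin i) => #(altD σ)) (fun τ => #(altD τ))]
        simp only [Ahat_succ]

theorem stmt14_general (n k : ℕ) :
    ∑ i ∈ Finset.range (n + 1), ∑ j ∈ Finset.range (k + 1),
        n.choose i * Ahat i (j + 1) * Ahat (n - i) (k - j + 1) =
      (n + 1 - k) * Ahat n (k + 1) + (k + 1) * Ahat n (k + 2) := by
  calc _ = ∑ i ∈ range (n + 1),
        #{π : Perm (Fin n) | #(altD π) = k + if i ∈ altDescentCuts π then 1 else 0} := by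
        refine sum_congr rfl fun i hi => ?_
        rw [card_altD_eq_add_ite_cut (mem_range_succ_iff.mp hi), mul_sum]
        simp only [mul_assoc]
    _ = ∑ π : Perm (Fin n),
        #{i ∈ range (n + 1) | #(altD π) = k + if i ∈ altDescentCuts π then 1 else 0} := by
        simp only [card_filter]
        exact sum_comm
    _ = _ := by
        simp only [card_filter_range_altD_eq_add_ite_cut, sum_add_distrib, ← sum_filter, sum_const,
          smul_eq_mul, Ahat_succ]
        ring

theorem stmt14 (n k : ℕ) (hkn : k ≤ n) :
    ∑ i ∈ Finset.range (n + 1), ∑ j ∈ Finset.range (k + 1),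
        n.choose i * Ahat i (j + 1) * Ahat (n - i) (k - j + 1) =
      (n + 1 - k) * Ahat n (k + 1) + (k + 1) * Ahat n (k + 2) :=
  stmt14_general n k
end

section
/- For a down-up alternating permutation σ of [n], î(σ) equals ⌊n²/4⌋ plus the number of occurrences of the generalized pattern 31-2 in σ, i.e., the number of pairs (i,j) with i+1 < j ≤ n and σᵢ₊₁ < σⱼ < σᵢ. -/
open Finset
open scoped Classical

lemma ent_ne {n : ℕ} (σ : Equiv.Perm (Fin n)) {i j : ℕ} (hi : i < n) (hj : j < n)
    (hij : i ≠ j) : ent σ i ≠ ent σ j := by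
  simp only [ent, dif_pos hi, dif_pos hj]
  intro hc
  apply hij
  have := σ.injective (Fin.val_injective hc)
  simpa [Fin.ext_iff] using this

lemma sum_pair_even (f : ℕ → ℕ) : ∀ m, ∑ i ∈ Finset.range (2*m), f i =
    ∑ i ∈ Finset.range (2*m), (if Even i then f i + f (i+1) else 0) := by
  intro m
  induction m with
  | zero => simp
  | succ m ih =>
    have h2 : 2*(m+1) = (2*m)+1+1 := by ring
    rw [h2, Finset.sum_range_succ, Finset.sum_range_succ, Finset.sum_range_succ,
      Finset.sum_range_succ, ih]
    have h1 : Even (2*m) := even_two_mul m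
    have h3 : ¬ Even (2*m+1) := by simp [Nat.even_add_one, h1]
    simp only [if_pos h1, if_neg h3]
    ring

lemma sum_pair (f : ℕ → ℕ) (n : ℕ) (h0 : ∀ i, n ≤ i → f i = 0) :
    ∑ i ∈ Finset.range n, f i =
      ∑ i ∈ Finset.range n, (if Even i then f i + f (i+1) else 0) := by
  have hsub : Finset.range n ⊆ Finset.range (2*n) := by
    apply Finset.range_subset_range.mpr; omega
  have pad1 : ∑ i ∈ Finset.range n, f i = ∑ i ∈ Finset.range (2*n), f i := by
    apply (Finset.sum_subset hsub _)
    intro x hx hnx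
    exact h0 x (by simpa using hnx)
  have pad2 : ∑ i ∈ Finset.range n, (if Even i then f i + f (i+1) else 0) =
      ∑ i ∈ Finset.range (2*n), (if Even i then f i + f (i+1) else 0) := by
    apply (Finset.sum_subset hsub _)
    intro x hx hnx
    have hxn : n ≤ x := by simpa using hnx
    rw [h0 x hxn, h0 (x+1) (by omega)]
    simp
  rw [pad1, pad2, sum_pair_even]

lemma inner_count (n i : ℕ) :
    ∑ j ∈ Finset.range n, (if i < j then (1:ℕ) else 0) = n - (i+1) := by
  induction n with
  | zero => simp
  | succ n ih =>
    rw [Finset.sum_range_succ, ih]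
    split_ifs <;> omega

lemma quarter : ∀ n : ℕ, ∑ i ∈ Finset.range n, (if Even i then n - (i+1) else 0) = n^2/4 := by
  intro n
  induction n using Nat.twoStepInduction with
  | zero => simp
  | one => simp
  | more n ih _ =>
    rw [Finset.sum_range_succ', Finset.sum_range_succ']
    have hshift : ∀ i : ℕ, (if Even (i+1+1) then n+2 - (i+1+1+1) else 0) =
        (if Even i then n - (i+1) else 0) := by
      intro i
      have he : Even (i+1+1) ↔ Even i := by simp [Nat.even_add_one]
      rw [if_congr he rfl rfl]
      split_ifs <;> omega
    simp only [hshift]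
    rw [ih]
    have h1 : ¬ Even (0+1) := by simp
    have h2 : Even 0 := Even.zero
    rw [if_neg h1, if_pos h2]
    have hsq : (n+2)^2 = n^2 + 4*n + 4 := by ring
    omega

theorem stmt17 (n : ℕ) (σ : Equiv.Perm (Fin n)) (h : DownUp σ) :
    altInv σ = n ^ 2 / 4 +
      ((Finset.range n ×ˢ Finset.range n).filter (fun p =>
        p.1 + 1 < p.2 ∧ ent σ (p.1 + 1) < ent σ p.2 ∧ ent σ p.2 < ent σ p.1)).card := by
  classical
  have hdesc : ∀ i, Even i → i < n - 1 → ent σ (i+1) < ent σ i := by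
    intro i hi hin
    rcases h i (Finset.mem_range.mpr hin) with ⟨_, hd⟩ | ⟨hne, _⟩
    · exact hd
    · exact absurd hi hne
  have hasc : ∀ i, ¬ Even i → i < n - 1 → ent σ i < ent σ (i+1) := by
    intro i hi hin
    rcases h i (Finset.mem_range.mpr hin) with ⟨he, _⟩ | ⟨_, ha⟩
    · exact absurd he hi
    · exact ha
  set χ : ℕ → ℕ → ℕ := fun i j => if (i < j ∧
    ((Even i ∧ ent σ j < ent σ i) ∨ (¬ Even i ∧ ent σ i < ent σ j))) then 1 else 0 with hχ
  set π : ℕ → ℕ → ℕ := fun i j =>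
    if (i + 1 < j ∧ ent σ (i+1) < ent σ j ∧ ent σ j < ent σ i) then 1 else 0 with hπ
  have hodd : ∀ i j, ¬ Even i → j < n → π i j = 0 := by
    intro i j hi hj
    simp only [hπ]
    rw [if_neg]
    rintro ⟨h1, h2, h3⟩
    have hin : i < n - 1 := by omega
    have := hasc i hi hin
    omega
  have point : ∀ i j, Even i → j < n →
      χ i j + χ (i+1) j = (if i < j then 1 else 0) + π i j := by
    intro i j hi hj
    have hi1 : ¬ Even (i+1) := by simp [Nat.even_add_one, hi]
    simp only [hχ, hπ, hi, hi1, true_and, not_true, false_and, not_false_eq_true,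
      false_or, or_false]
    by_cases h2 : i + 1 < j
    · have hin : i < n - 1 := by omega
      have hd := hdesc i hi hin
      have hne1 := ent_ne σ (show j < n from hj) (show i < n by omega) (by omega)
      have hne2 := ent_ne σ (show j < n from hj) (show i+1 < n by omega) (by omega)
      split_ifs <;> omega
    · by_cases h1 : i < j
      · have hji : j = i + 1 := by omega
        subst hji
        have hin : i < n - 1 := by omega
        have hd := hdesc i hi hin
        split_ifs <;> omega
      · split_ifs <;> omega
  have lhs : altInv σ = ∑ i ∈ Finset.range n, ∑ j ∈ Finset.range n, χ i j := by
    rw [altInv, Finset.card_filter, Finset.sum_product]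
  have rhs : ((Finset.range n ×ˢ Finset.range n).filter (fun p =>
      p.1 + 1 < p.2 ∧ ent σ (p.1 + 1) < ent σ p.2 ∧ ent σ p.2 < ent σ p.1)).card
      = ∑ i ∈ Finset.range n, ∑ j ∈ Finset.range n, π i j := by
    rw [Finset.card_filter, Finset.sum_product]
  have hf0 : ∀ i, n ≤ i → (∑ j ∈ Finset.range n, χ i j) = 0 := by
    intro i hi
    apply Finset.sum_eq_zero
    intro j hj
    have hjn := Finset.mem_range.mp hj
    simp only [hχ]
    rw [if_neg]
    rintro ⟨h1, -⟩
    omega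
  rw [lhs, rhs]
  rw [sum_pair (fun i => ∑ j ∈ Finset.range n, χ i j) n hf0]
  have step : ∀ i ∈ Finset.range n,
      (if Even i then (∑ j ∈ Finset.range n, χ i j) + (∑ j ∈ Finset.range n, χ (i+1) j) else 0)
      = (if Even i then n - (i+1) else 0) + ∑ j ∈ Finset.range n, π i j := by
    intro i hi
    by_cases he : Even i
    · rw [if_pos he, if_pos he, ← Finset.sum_add_distrib,
        Finset.sum_congr rfl (fun j hj => point i j he (Finset.mem_range.mp hj)),
        Finset.sum_add_distrib, inner_count]
    · rw [if_neg he, if_neg he,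
        Finset.sum_eq_zero (fun j hj => hodd i j he (Finset.mem_range.mp hj))]
      simp
  rw [Finset.sum_congr rfl step, Finset.sum_add_distrib, quarter]
end

section
/- A down-up alternating permutation σ of [n] satisfies î(σ) = ⌊n²/4⌋ if and only if σ avoids the pattern 312 (there is no triple of indices i < k < j with σₖ < σⱼ < σᵢ). -/
open Finset
open scoped Classical

namespace Stmt18Aux

/-- row sum of the alternating inversion table. -/
def rowF {n : ℕ} (σ : Equiv.Perm (Fin n)) (i : ℕ) : ℕ :=
  ((Finset.range n).filter (fun j => i < j ∧
    ((Even i ∧ ent σ j < ent σ i) ∨ (¬ Even i ∧ ent σ i < ent σ j)))).card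

/-- number of special 312 patterns starting at positions `i, i+1`. -/
def rowE {n : ℕ} (σ : Equiv.Perm (Fin n)) (i : ℕ) : ℕ :=
  ((Finset.range n).filter (fun j => i + 1 < j ∧
    ent σ (i + 1) < ent σ j ∧ ent σ j < ent σ i)).card

lemma ent_inj {n : ℕ} (σ : Equiv.Perm (Fin n)) {a b : ℕ} (ha : a < n) (hb : b < n)
    (h : ent σ a = ent σ b) : a = b := by
  unfold ent at h
  rw [dif_pos ha, dif_pos hb] at h
  have := σ.injective (Fin.val_injective h)
  simpa using this

lemma ent_val {n : ℕ} (σ : Equiv.Perm (Fin n)) (i : Fin n) : ent σ i.val = (σ i).val := by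
  simp [ent, i.isLt]

lemma altInv_eq_sum {n : ℕ} (σ : Equiv.Perm (Fin n)) :
    altInv σ = ∑ i ∈ Finset.range n, rowF σ i := by
  unfold altInv rowF
  rw [Finset.card_filter, Finset.sum_product]
  refine Finset.sum_congr rfl (fun i _ => ?_)
  rw [Finset.card_filter]

lemma rowF_zero {n : ℕ} (σ : Equiv.Perm (Fin n)) (i : ℕ) (hi : n ≤ i + 1) :
    rowF σ i = 0 := by
  unfold rowF
  rw [Finset.card_eq_zero, Finset.filter_eq_empty_iff]
  intro j hj
  simp only [Finset.mem_range] at hj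
  rintro ⟨h1, -⟩
  omega

lemma rowE_zero {n : ℕ} (σ : Equiv.Perm (Fin n)) (i : ℕ) (hi : n ≤ i + 2) :
    rowE σ i = 0 := by
  unfold rowE
  rw [Finset.card_eq_zero, Finset.filter_eq_empty_iff]
  intro j hj
  simp only [Finset.mem_range] at hj
  rintro ⟨h1, -⟩
  omega

lemma pair_row {n : ℕ} (σ : Equiv.Perm (Fin n)) (h : DownUp σ) (i : ℕ)
    (hi : Even i) (hin : i + 1 < n) :
    rowF σ i + rowF σ (i + 1) = (n - 1 - i) + rowE σ i := by
  have hdesc : ent σ (i + 1) < ent σ i := by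
    rcases h i (Finset.mem_range.mpr (by omega)) with ⟨_, h2⟩ | ⟨h1, _⟩
    · exact h2
    · exact absurd hi h1
  have hnotev : ¬ Even (i + 1) := by simp [Nat.even_add_one, hi]
  have hsub : n - 1 - i = ((Finset.range n).filter (fun j => i < j)).card := by
    have : (Finset.range n).filter (fun j => i < j) = Finset.Ico (i + 1) n := by
      ext j; simp [Finset.mem_filter, Finset.mem_range, Finset.mem_Ico]; omega
    rw [this, Nat.card_Ico]; omega
  unfold rowF rowE
  rw [hsub]
  simp only [hi, hnotev, true_and, false_and, not_true, not_false_eq_true, false_or, or_false]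
  rw [Finset.card_filter, Finset.card_filter, Finset.card_filter, Finset.card_filter,
    ← Finset.sum_add_distrib, ← Finset.sum_add_distrib]
  refine Finset.sum_congr rfl (fun j hj => ?_)
  simp only [Finset.mem_range] at hj
  rcases Nat.lt_trichotomy j (i + 1) with hc | hc | hc
  · have h1 : ¬ (i < j ∧ ent σ j < ent σ i) := by rintro ⟨a, -⟩; omega
    have h2 : ¬ (i + 1 < j ∧ ent σ (i + 1) < ent σ j) := by rintro ⟨a, -⟩; omega
    have h3 : ¬ (i < j) := by omega
    have h4 : ¬ (i + 1 < j ∧ ent σ (i + 1) < ent σ j ∧ ent σ j < ent σ i) := by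
      rintro ⟨a, -⟩; omega
    rw [if_neg h1, if_neg h2, if_neg h3, if_neg h4]
  · subst hc
    have h1 : i < i + 1 ∧ ent σ (i + 1) < ent σ i := ⟨by omega, hdesc⟩
    have h2 : ¬ (i + 1 < i + 1 ∧ ent σ (i + 1) < ent σ (i + 1)) := by rintro ⟨a, -⟩; omega
    have h4 : ¬ (i + 1 < i + 1 ∧ ent σ (i + 1) < ent σ (i + 1) ∧ ent σ (i + 1) < ent σ i) := by
      rintro ⟨a, -⟩; omega
    rw [if_pos h1, if_neg h2, if_pos (show i < i + 1 by omega), if_neg h4]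
  · have hne1 : ent σ j ≠ ent σ i := fun he => by
      have := ent_inj σ hj (by omega) he; omega
    have hne2 : ent σ j ≠ ent σ (i + 1) := fun he => by
      have := ent_inj σ hj (by omega) he; omega
    split_ifs <;> omega

lemma sum_pairs (F : ℕ → ℕ) (m : ℕ) :
    ∑ i ∈ Finset.range (2 * m), F i = ∑ k ∈ Finset.range m, (F (2 * k) + F (2 * k + 1)) := by
  induction m with
  | zero => simp
  | succ m ih =>
    rw [show 2 * (m + 1) = 2 * m + 1 + 1 by ring, Finset.sum_range_succ, Finset.sum_range_succ,
      Finset.sum_range_succ, ih]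
    omega

lemma sum_rowF_pairs {n : ℕ} (σ : Equiv.Perm (Fin n)) :
    ∑ i ∈ Finset.range n, rowF σ i
      = ∑ k ∈ Finset.range ((n + 1) / 2), (rowF σ (2 * k) + rowF σ (2 * k + 1)) := by
  rcases Nat.even_or_odd n with ⟨m, hm⟩ | ⟨m, hm⟩
  · have hn : n = 2 * m := by omega
    have h2 : (n + 1) / 2 = m := by omega
    rw [show Finset.range n = Finset.range (2 * m) from by rw [hn], h2, sum_pairs]
  · have hn : n = 2 * m + 1 := by omega
    have h2 : (n + 1) / 2 = m + 1 := by omega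
    have hz : rowF σ (2 * m + 1) = 0 := rowF_zero σ _ (by omega)
    rw [h2, Finset.sum_range_succ, hz,
      show Finset.range n = Finset.range (2 * m + 1) from by rw [hn],
      Finset.sum_range_succ, sum_pairs]
    omega

lemma sum_base (n : ℕ) : ∑ k ∈ Finset.range ((n + 1) / 2), (n - 1 - 2 * k) = n ^ 2 / 4 := by
  induction n using Nat.twoStepInduction with
  | zero => simp
  | one => simp
  | more n ih _ =>
    have h2 : (n + 2 + 1) / 2 = (n + 1) / 2 + 1 := by omega
    have hstep : ∀ k ∈ Finset.range ((n + 1) / 2), n + 2 - 1 - 2 * k = (n - 1 - 2 * k) + 2 := by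
      intro k hk
      simp only [Finset.mem_range] at hk
      omega
    rw [h2, Finset.sum_range_succ, Finset.sum_congr rfl hstep, Finset.sum_add_distrib,
      Finset.sum_const, Finset.card_range, smul_eq_mul, ih]
    have hsq : (n + 2) ^ 2 = n ^ 2 + 4 * n + 4 := by ring
    omega

lemma altInv_identity {n : ℕ} (σ : Equiv.Perm (Fin n)) (h : DownUp σ) :
    altInv σ = n ^ 2 / 4 + ∑ k ∈ Finset.range ((n + 1) / 2), rowE σ (2 * k) := by
  rw [altInv_eq_sum, sum_rowF_pairs]
  have hstep : ∀ k ∈ Finset.range ((n + 1) / 2),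
      rowF σ (2 * k) + rowF σ (2 * k + 1) = (n - 1 - 2 * k) + rowE σ (2 * k) := by
    intro k hk
    simp only [Finset.mem_range] at hk
    by_cases hlt : 2 * k + 1 < n
    · exact pair_row σ h (2 * k) (even_two_mul k) hlt
    · have h1 : rowF σ (2 * k) = 0 := rowF_zero σ _ (by omega)
      have h2 : rowF σ (2 * k + 1) = 0 := rowF_zero σ _ (by omega)
      have h3 : rowE σ (2 * k) = 0 := rowE_zero σ _ (by omega)
      rw [h1, h2, h3]
      omega
  rw [Finset.sum_congr rfl hstep, Finset.sum_add_distrib, sum_base]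

lemma e_zero_iff {n : ℕ} (σ : Equiv.Perm (Fin n)) (h : DownUp σ) :
    (∑ k ∈ Finset.range ((n + 1) / 2), rowE σ (2 * k)) = 0 ↔
      ∀ i k j : Fin n, i < k → k < j → ¬(σ k < σ j ∧ σ j < σ i) := by
  constructor
  · intro hsum
    rintro i k j hik hkj ⟨h1, h2⟩
    -- translate to ℕ
    set a := i.val with ha
    set b := k.val with hb
    set c := j.val with hc
    have hab : a < b := hik
    have hbc : b < c := hkj
    have hcn : c < n := j.isLt
    have hval1 : ent σ b < ent σ c := by rw [ent_val, ent_val]; exact h1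
    have hval2 : ent σ c < ent σ a := by rw [ent_val, ent_val]; exact h2
    -- the set of positions s ∈ [a, b) with ent σ c < ent σ s
    set S := (Finset.range b).filter (fun s => a ≤ s ∧ ent σ c < ent σ s) with hS
    have haS : a ∈ S := by
      simp only [hS, Finset.mem_filter, Finset.mem_range]
      exact ⟨hab, le_refl a, hval2⟩
    have hSne : S.Nonempty := ⟨a, haS⟩
    set t := S.max' hSne with ht
    have htS : t ∈ S := S.max'_mem hSne
    simp only [hS, Finset.mem_filter, Finset.mem_range] at htS
    obtain ⟨htb, hat, hct⟩ := htS
    have htn : t + 1 < n := by omega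
    -- ent σ (t+1) < ent σ c
    have hkey : ent σ (t + 1) < ent σ c := by
      by_cases hb1 : t + 1 = b
      · rw [hb1]; exact hval1
      · have htb1 : t + 1 < b := by omega
        have hnotmem : t + 1 ∉ S := fun hmem => by
          have := S.le_max' _ hmem
          omega
        have : ¬ (ent σ c < ent σ (t + 1)) := by
          intro hlt
          exact hnotmem (by
            simp only [hS, Finset.mem_filter, Finset.mem_range]
            exact ⟨htb1, by omega, hlt⟩)
        have hne : ent σ (t + 1) ≠ ent σ c := fun he => by
          have := ent_inj σ (by omega) hcn he
          omega
        omega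
    have hdesc : ent σ (t + 1) < ent σ t := by omega
    have hteven : Even t := by
      rcases h t (Finset.mem_range.mpr (by omega)) with ⟨he, -⟩ | ⟨-, hlt⟩
      · exact he
      · omega
    obtain ⟨m, hm⟩ := hteven
    have htm : t = 2 * m := by omega
    have hmlt : m ∈ Finset.range ((n + 1) / 2) := Finset.mem_range.mpr (by omega)
    have hzero : rowE σ (2 * m) = 0 :=
      (Finset.sum_eq_zero_iff.mp hsum) m hmlt
    have hpos : c ∈ (Finset.range n).filter (fun j => 2 * m + 1 < j ∧
        ent σ (2 * m + 1) < ent σ j ∧ ent σ j < ent σ (2 * m)) := by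
      simp only [Finset.mem_filter, Finset.mem_range]
      rw [← htm]
      exact ⟨hcn, by omega, hkey, by omega⟩
    have hposcard : 0 < rowE σ (2 * m) := by
      rw [rowE]; exact Finset.card_pos.mpr ⟨c, hpos⟩
    omega
  · intro havoid
    refine Finset.sum_eq_zero (fun k hk => ?_)
    simp only [Finset.mem_range] at hk
    by_contra hne
    rw [← ne_eq, ← Nat.pos_iff_ne_zero] at hne
    obtain ⟨j, hj⟩ := Finset.card_pos.mp hne
    simp only [rowE, Finset.mem_filter, Finset.mem_range] at hj
    obtain ⟨hjn, hjgt, hv1, hv2⟩ := hj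
    have h2k : 2 * k < n := by omega
    have h2k1 : 2 * k + 1 < n := by omega
    refine havoid ⟨2 * k, h2k⟩ ⟨2 * k + 1, h2k1⟩ ⟨j, hjn⟩ (by simp [Fin.lt_def])
      (by simp [Fin.lt_def]; omega) ⟨?_, ?_⟩
    · have := hv1
      rw [show (2 * k + 1) = (⟨2 * k + 1, h2k1⟩ : Fin n).val from rfl,
        show j = (⟨j, hjn⟩ : Fin n).val from rfl, ent_val, ent_val] at this
      exact this
    · have := hv2
      rw [show (2 * k) = (⟨2 * k, h2k⟩ : Fin n).val from rfl,
        show j = (⟨j, hjn⟩ : Fin n).val from rfl, ent_val, ent_val] at this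
      exact this

end Stmt18Aux

theorem stmt18 (n : ℕ) (σ : Equiv.Perm (Fin n)) (h : DownUp σ) :
    altInv σ = n ^ 2 / 4 ↔
      ∀ i k j : Fin n, i < k → k < j → ¬(σ k < σ j ∧ σ j < σ i) := by
  rw [Stmt18Aux.altInv_identity σ h, ← Stmt18Aux.e_zero_iff σ h]
  omega
end
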